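/- arXiv:2604.03100 — 2 statements merged into one kernel-verified Lean document; each statement's English description precedes it below -/
import Mathlib

section
/- If G is a dilation-invariant (homogeneous) subgroup of the Heisenberg group that contains some element (v,u) with u ≠ 0, then G contains the whole center Z = {0} × ℝ, and consequently G = V × ℝ for the linear subspace V = π(G). -/
open scoped BigOperators

/-- Points of ℝ^{2D}: pairs (p, q) of vectors in ℝ^D. -/
abbrev HVec (D : ℕ) := (Fin D → ℝ) × (Fin D → ℝ)

/-- The standard symplectic form ω on ℝ^{2D}. -/
def symp {D : ℕ} (v w : HVec D) : ℝ := ∑ i, (v.1 i * w.2 i - v.2 i * w.1 i)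

/-- The (2D+1)-dimensional Heisenberg group, as a set ℝ^{2D} × ℝ. -/
@[ext] structure Heis (D : ℕ) where
  v : HVec D
  u : ℝ

namespace Heis
variable {D : ℕ}

lemma symp_self (v : HVec D) : symp v v = 0 := by
  simp only [symp]
  exact Finset.sum_eq_zero (fun i _ => by ring)

lemma symp_add_left (v w x : HVec D) : symp (v + w) x = symp v x + symp w x := by
  simp only [symp, Prod.fst_add, Prod.snd_add, Pi.add_apply, ← Finset.sum_add_distrib]
  exact Finset.sum_congr rfl (fun i _ => by ring)

lemma symp_add_right (v w x : HVec D) : symp v (w + x) = symp v w + symp v x := by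
  simp only [symp, Prod.fst_add, Prod.snd_add, Pi.add_apply, ← Finset.sum_add_distrib]
  exact Finset.sum_congr rfl (fun i _ => by ring)

lemma symp_neg_left (v w : HVec D) : symp (-v) w = - symp v w := by
  simp only [symp, Prod.fst_neg, Prod.snd_neg, Pi.neg_apply, ← Finset.sum_neg_distrib]
  exact Finset.sum_congr rfl (fun i _ => by ring)

noncomputable instance : Mul (Heis D) := ⟨fun g h => ⟨g.v + h.v, g.u + h.u + (1/2) * symp g.v h.v⟩⟩
instance : One (Heis D) := ⟨⟨0, 0⟩⟩
instance : Inv (Heis D) := ⟨fun g => ⟨-g.v, -g.u⟩⟩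

@[simp] lemma mul_v (g h : Heis D) : (g * h).v = g.v + h.v := rfl
@[simp] lemma mul_u (g h : Heis D) : (g * h).u = g.u + h.u + (1/2) * symp g.v h.v := rfl
@[simp] lemma one_v : (1 : Heis D).v = 0 := rfl
@[simp] lemma one_u : (1 : Heis D).u = 0 := rfl
@[simp] lemma inv_v (g : Heis D) : g⁻¹.v = -g.v := rfl
@[simp] lemma inv_u (g : Heis D) : g⁻¹.u = -g.u := rfl

noncomputable instance : Group (Heis D) where
  mul_assoc g h k := by
    ext <;> simp [add_assoc, symp_add_left, symp_add_right] <;> ring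
  one_mul g := by ext <;> simp [symp]
  mul_one g := by ext <;> simp [symp]
  inv_mul_cancel g := by
    ext <;> simp [symp_neg_left, symp_self]

/-- Dilation by r. -/
def dil (r : ℝ) (g : Heis D) : Heis D := ⟨r • g.v, r ^ 2 * g.u⟩

/-- The squared Euclidean norm on ℝ^{2D}. -/
def vnormSq {D : ℕ} (v : HVec D) : ℝ := ∑ i, ((v.1 i) ^ 2 + (v.2 i) ^ 2)

/-- The Cygan–Korányi norm. -/
noncomputable def nCK (g : Heis D) : ℝ := (vnormSq g.v ^ 2 + g.u ^ 2) ^ ((1 : ℝ) / 4)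

/-- The Cygan–Korányi (right-invariant) distance. -/
noncomputable def dCK (g h : Heis D) : ℝ := nCK (g * h⁻¹)

/-- The Euclidean distance on ℝ^{2D+1}. -/
noncomputable def dE (g h : Heis D) : ℝ := Real.sqrt (vnormSq (g.v - h.v) + (g.u - h.u) ^ 2)

/-- Heis D as a plain vector space (ℝ^{2D+1}). -/
abbrev Vec (D : ℕ) := HVec D × ℝ

def toVec (g : Heis D) : Vec D := (g.v, g.u)

instance : TopologicalSpace (Heis D) := TopologicalSpace.induced (toVec (D := D)) inferInstance

/-- generators of the discrete Heisenberg group -/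
def xgen (i : Fin D) : Heis D := ⟨(Pi.single i 1, 0), 0⟩
def ygen (i : Fin D) : Heis D := ⟨(0, Pi.single i 1), 0⟩

/-- the discrete Heisenberg group -/
noncomputable def discH (D : ℕ) : Subgroup (Heis D) :=
  Subgroup.closure ({g | ∃ i, g = xgen i ∨ g = ygen i})

/-- the vertical axis (center) as a set -/
def zAxis (D : ℕ) : Set (Heis D) := {g | g.v = 0}

end Heis


namespace Heis
variable {D : ℕ}

lemma symp_neg_right' (v w : HVec D) : symp v (-w) = - symp v w := by
  simp only [symp, Prod.fst_neg, Prod.snd_neg, Pi.neg_apply, ← Finset.sum_neg_distrib]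
  exact Finset.sum_congr rfl (fun i _ => by ring)

lemma symp_smul_smul' (r s : ℝ) (v : HVec D) : symp (r • v) (s • v) = 0 := by
  simp only [symp, Prod.smul_fst, Prod.smul_snd, Pi.smul_apply, smul_eq_mul]
  exact Finset.sum_eq_zero (fun i _ => by ring)

end Heis

/-- a homogeneous subgroup containing an element with u ≠ 0
contains the whole center, and equals V × ℝ with V = π(G). -/
theorem heis_homog_vertical (D : ℕ) (G : Subgroup (Heis D))
    (hhom : ∀ r : ℝ, 0 < r → Heis.dil r '' (G : Set (Heis D)) = (G : Set (Heis D)))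
    (hu : ∃ g ∈ G, g.u ≠ 0) :
    Heis.zAxis D ⊆ (G : Set (Heis D)) ∧
    (∀ g : Heis D, g ∈ G ↔ g.v ∈ Heis.v '' (G : Set (Heis D))) := by
  obtain ⟨g, hg, hgu⟩ := hu
  have hmem : ∀ r : ℝ, 0 < r → (⟨r • g.v, r ^ 2 * g.u⟩ : Heis D) ∈ G := by
    intro r hr
    have h1 : Heis.dil r g ∈ Heis.dil r '' (G : Set (Heis D)) :=
      Set.mem_image_of_mem _ hg
    rw [hhom r hr] at h1
    exact h1
  have key : ∀ c : ℝ, 0 < c → (⟨0, -(2 * c * g.u)⟩ : Heis D) ∈ G := by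
    intro c hc
    have hr : (0:ℝ) < Real.sqrt c := Real.sqrt_pos.2 hc
    set r := Real.sqrt c with hrdef
    have hrc : r ^ 2 = c := Real.sq_sqrt hc.le
    have h1 := hmem r hr
    have h2 := hmem (2 * r) (by linarith)
    have hprod := mul_mem (mul_mem h1 h1) (inv_mem h2)
    have heq : ((⟨r • g.v, r ^ 2 * g.u⟩ : Heis D) * ⟨r • g.v, r ^ 2 * g.u⟩) *
        (⟨(2 * r) • g.v, (2 * r) ^ 2 * g.u⟩ : Heis D)⁻¹ = ⟨0, -(2 * c * g.u)⟩ := by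
      refine Heis.ext ?_ ?_
      · show (r • g.v + r • g.v + -((2 * r) • g.v)) = (0 : HVec D)
        rw [show (2 * r) • g.v = r • g.v + r • g.v by rw [← add_smul]; ring_nf]
        abel
      · show (r ^ 2 * g.u + r ^ 2 * g.u + 1/2 * symp (r • g.v) (r • g.v))
            + -((2*r) ^ 2 * g.u)
            + 1/2 * symp (r • g.v + r • g.v) (-((2*r) • g.v)) = -(2 * c * g.u)
        rw [Heis.symp_neg_right', Heis.symp_add_left, Heis.symp_smul_smul',
            Heis.symp_smul_smul', ← hrc]
        ring
    rwa [heq] at hprod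
  have hz : ∀ t : ℝ, (⟨0, t⟩ : Heis D) ∈ G := by
    have hneg : ∀ t : ℝ, t * g.u < 0 → (⟨0, t⟩ : Heis D) ∈ G := by
      intro t ht
      have hc : 0 < -t / (2 * g.u) := by
        rcases mul_neg_iff.1 ht with ⟨ht1, hu1⟩ | ⟨ht1, hu1⟩
        · exact div_pos_of_neg_of_neg (by linarith) (by linarith)
        · exact div_pos (by linarith) (by linarith)
      have := key _ hc
      have harg : -(2 * (-t / (2 * g.u)) * g.u) = t := by field_simp
      rwa [harg] at this
    intro t
    rcases lt_trichotomy (t * g.u) 0 with h | h | h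
    · exact hneg t h
    · have ht : t = 0 := by
        rcases mul_eq_zero.1 h with h' | h'
        · exact h'
        · exact absurd h' hgu
      subst ht
      exact one_mem G
    · have : (⟨0, t⟩ : Heis D) = (⟨0, -t⟩ : Heis D)⁻¹ := by
        ext <;> simp
      rw [this]
      exact inv_mem (hneg (-t) (by nlinarith))
  have hzax : Heis.zAxis D ⊆ (G : Set (Heis D)) := by
    intro z hzv
    have hzeq : z = ⟨0, z.u⟩ := Heis.ext hzv rfl
    rw [hzeq]
    exact hz z.u
  refine ⟨hzax, fun g' => ⟨fun h => ⟨g', h, rfl⟩, ?_⟩⟩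
  rintro ⟨h, hh, hvh⟩
  have hc : (g' * h⁻¹ : Heis D) ∈ Heis.zAxis D := by
    show (g' * h⁻¹).v = 0
    simp [hvh]
  have hm : g' * h⁻¹ ∈ G := hzax hc
  have := mul_mem hm hh
  rwa [inv_mul_cancel_right] at this
end

section
/- A homogeneous subgroup of the Heisenberg group is either of the form V × {0} with V an isotropic linear subspace of ℝ^{2D} (a horizontal group), or of the form V × ℝ with V a linear subspace (a vertical group). -/
open scoped BigOperators

section Aux
variable {D : ℕ}

lemma symp_zero_right (v : HVec D) : symp v 0 = 0 := by
  simp [symp]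

lemma symp_smul_right (c : ℝ) (v w : HVec D) : symp v (c • w) = c * symp v w := by
  simp only [symp, Prod.smul_fst, Prod.smul_snd, Pi.smul_apply, smul_eq_mul, Finset.mul_sum]
  exact Finset.sum_congr rfl (fun i _ => by ring)

lemma symp_neg_right (v w : HVec D) : symp v (-w) = - symp v w := by
  have := symp_smul_right (-1 : ℝ) v w
  simpa using this

end Aux

/-- a homogeneous subgroup is a horizontal group (V × {0} with V
isotropic) or a vertical group (V × ℝ with V a linear subspace). -/
theorem heis_homog_classification (D : ℕ) (G : Subgroup (Heis D))
    (hhom : ∀ r : ℝ, 0 < r → Heis.dil r '' (G : Set (Heis D)) = (G : Set (Heis D))) :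
    (∃ V : Submodule ℝ (HVec D), (∀ a ∈ V, ∀ b ∈ V, symp a b = 0) ∧
      (G : Set (Heis D)) = {g | g.v ∈ V ∧ g.u = 0}) ∨
    (∃ V : Submodule ℝ (HVec D), (G : Set (Heis D)) = {g | g.v ∈ V}) := by
  classical
  have hdil : ∀ r : ℝ, 0 < r → ∀ g : Heis D, g ∈ G → Heis.dil r g ∈ G := by
    intro r hr g hg
    have h := hhom r hr
    have : Heis.dil r g ∈ Heis.dil r '' (G : Set (Heis D)) := ⟨g, hg, rfl⟩
    rw [h] at this
    exact this
  have hsmulmem : ∀ (c : ℝ) (g : Heis D), g ∈ G → ∃ h ∈ G, h.v = c • g.v := by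
    intro c g hg
    rcases lt_trichotomy c 0 with hc | hc | hc
    · refine ⟨Heis.dil (-c) g⁻¹, hdil _ (by linarith) _ (inv_mem hg), ?_⟩
      show (-c) • (g⁻¹.v) = c • g.v
      simp [smul_neg, neg_smul]
    · exact ⟨1, one_mem G, by simp [hc]⟩
    · exact ⟨Heis.dil c g, hdil _ hc _ hg, rfl⟩
  set V : Submodule ℝ (HVec D) :=
    { carrier := {a | ∃ g ∈ G, g.v = a}
      zero_mem' := ⟨1, one_mem G, rfl⟩
      add_mem' := by
        rintro a b ⟨g, hg, rfl⟩ ⟨h, hh, rfl⟩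
        exact ⟨g * h, mul_mem hg hh, rfl⟩
      smul_mem' := by
        rintro c a ⟨g, hg, rfl⟩
        exact hsmulmem c g hg } with hV
  by_cases hP : ∃ g ∈ G, g.v = 0 ∧ g.u ≠ 0
  · -- vertical case
    right
    obtain ⟨g₀, hg₀, hv0, hu0⟩ := hP
    have hcent : ∀ t : ℝ, (⟨0, t⟩ : Heis D) ∈ G := by
      intro t
      rcases eq_or_ne t 0 with ht | ht
      · have : (⟨0, t⟩ : Heis D) = 1 := by ext <;> simp [ht]
        rw [this]; exact one_mem G
      · have hu0' : (g₀.u) ≠ 0 := hu0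
        rcases lt_or_gt_of_ne (div_ne_zero ht hu0') with hs | hs
        · -- t / g₀.u < 0, use g₀⁻¹
          set r := Real.sqrt (-(t / g₀.u)) with hr
          have hrpos : 0 < r := Real.sqrt_pos.mpr (by linarith)
          have hmem := hdil r hrpos g₀⁻¹ (inv_mem hg₀)
          have : Heis.dil r g₀⁻¹ = ⟨0, t⟩ := by
            refine Heis.ext ?_ ?_
            · show r • (-g₀.v) = 0
              simp [hv0]
            · show r ^ 2 * (-g₀.u) = t
              have : r ^ 2 = -(t / g₀.u) := Real.sq_sqrt (by linarith)
              rw [this]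
              field_simp
          rwa [this] at hmem
        · set r := Real.sqrt (t / g₀.u) with hr
          have hrpos : 0 < r := Real.sqrt_pos.mpr hs
          have hmem := hdil r hrpos g₀ hg₀
          have : Heis.dil r g₀ = ⟨0, t⟩ := by
            refine Heis.ext ?_ ?_
            · show r • g₀.v = 0
              simp [hv0]
            · show r ^ 2 * g₀.u = t
              have : r ^ 2 = t / g₀.u := Real.sq_sqrt (le_of_lt hs)
              rw [this]
              field_simp
          rwa [this] at hmem
    refine ⟨V, ?_⟩
    ext g
    constructor
    · intro hg
      exact ⟨g, hg, rfl⟩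
    · rintro ⟨h, hh, hhv⟩
      have : g = h * ⟨0, g.u - h.u⟩ := by
        refine Heis.ext ?_ ?_
        · show g.v = h.v + 0
          simp [hhv]
        · show g.u = h.u + (g.u - h.u) + (1/2) * symp h.v 0
          rw [symp_zero_right]; ring
      rw [this]
      exact mul_mem hh (hcent _)
  · -- horizontal case
    left
    push_neg at hP
    have hu0 : ∀ g : Heis D, g ∈ G → g.u = 0 := by
      intro g hg
      set z : Heis D := (g * g) * (Heis.dil 2 g)⁻¹ with hz
      have hzmem : z ∈ G := mul_mem (mul_mem hg hg) (inv_mem (hdil 2 two_pos g hg))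
      have hzv : z.v = 0 := by
        show (g.v + g.v) + -((2:ℝ) • g.v) = 0
        rw [two_smul]
        abel
      have hzu : z.u = -2 * g.u := by
        show (g.u + g.u + (1/2) * symp g.v g.v) + (-(2 ^ 2 * g.u)) +
          (1/2) * symp (g.v + g.v) (-((2:ℝ) • g.v)) = -2 * g.u
        rw [Heis.symp_self, Heis.symp_add_left, symp_neg_right, symp_smul_right,
          Heis.symp_self]
        ring
      have := hP z hzmem hzv
      rw [hzu] at this
      linarith
    refine ⟨V, ?_, ?_⟩
    · rintro a ⟨g, hg, rfl⟩ b ⟨h, hh, rfl⟩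
      have h1 := hu0 (g * h) (mul_mem hg hh)
      have h2 := hu0 g hg
      have h3 := hu0 h hh
      simp only [Heis.mul_u, h2, h3] at h1
      linarith
    · ext g
      constructor
      · intro hg
        exact ⟨⟨g, hg, rfl⟩, hu0 g hg⟩
      · rintro ⟨⟨h, hh, hhv⟩, hgu⟩
        have : g = h := by
          refine Heis.ext hhv.symm ?_
          rw [hgu, hu0 h hh]
        rw [this]
        exact hh
end
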